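/- The set of the 24 Hurwitz units {±1, ±i, ±j, ±k, (±1±i±j±k)/2} is a subgroup of the unit group ℍˣ of the real quaternions, and this group — the binary tetrahedral group 2T, i.e. the group of 24 rotors generated by the reflections of A₃ — is isomorphic as a group to SL(2, ℤ/3ℤ). -/

import Mathlib

noncomputable section

/-- The quaternion unit `i`. -/
def qi : Quaternion ℝ := ⟨0, 1, 0, 0⟩
/-- The quaternion unit `j`. -/
def qj : Quaternion ℝ := ⟨0, 0, 1, 0⟩
/-- The quaternion unit `k`. -/
def qk : Quaternion ℝ := ⟨0, 0, 0, 1⟩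

/-- The sign set `{1, -1}`. -/
def pm : Set ℝ := {1, -1}

/-- The 24 Hurwitz units `±1, ±i, ±j, ±k, (±1±i±j±k)/2`. -/
def hurwitzUnits : Set (Quaternion ℝ) :=
  {1, -1, qi, -qi, qj, -qj, qk, -qk} ∪
  {x | ∃ ε₀ ∈ pm, ∃ ε₁ ∈ pm, ∃ ε₂ ∈ pm, ∃ ε₃ ∈ pm,
    x = (2 : ℝ)⁻¹ • (ε₀ • (1 : Quaternion ℝ) + ε₁ • qi + ε₂ • qj + ε₃ • qk)}

/-!
The 24 Hurwitz units are the norm-one elements of the Hurwitz order `ℤ⁴ + ℤω`,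
`ω = (1 + i + j + k)/2`, which is a ring because `ω² = ω - 1` and `yω, ωy ∈ ℤ⁴ + ℤω` for
integral `y`; the inverse of a unit is its conjugate. Since `2` is invertible mod `3`, reduction
mod `3` is multiplicative on the Hurwitz order, and `ℍ[𝔽₃] ≅ M₂(𝔽₃)` (with `i`, `j` sent to
`[[0, -1], [1, 0]]`, `[[1, 1], [1, -1]]`) turns the norm into the determinant. On units the
reduction is injective: the coordinates of `2x` lie in `[-2, 2]`, so only `x = 1` reduces to `1`.
It is onto `SL(2, 𝔽₃)`: lift the coordinates to `{-1, 0, 1}`; the lift `e` has norm `1` or `4`,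
and then `e` or `-e/2` is a Hurwitz unit reducing to the given element, as `-1/2 ≡ 1 (mod 3)`.
-/

open Quaternion

namespace Quaternion

variable {R S : Type*} [CommRing R] [CommRing S]

/- The anonymous constructor `⟨a, b, c, d⟩ : ℍ[R]` elaborates to a term of type
`QuaternionAlgebra R (-1) 0 (-1)`, on which the simp lemmas about `ℍ[R]` do not fire. -/
def mk (a b c d : R) : ℍ[R] := ⟨a, b, c, d⟩

@[simp] theorem re_mk (a b c d : R) : (mk a b c d).re = a := rfl
@[simp] theorem imI_mk (a b c d : R) : (mk a b c d).imI = b := rfl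
@[simp] theorem imJ_mk (a b c d : R) : (mk a b c d).imJ = c := rfl
@[simp] theorem imK_mk (a b c d : R) : (mk a b c d).imK = d := rfl

def map (f : R →+* S) : ℍ[R] →+* ℍ[S] where
  toFun x := mk (f x.re) (f x.imI) (f x.imJ) (f x.imK)
  map_one' := by ext <;> simp
  map_mul' x y := by ext <;> simp
  map_zero' := by ext <;> simp
  map_add' x y := by ext <;> simp

@[simp] theorem re_map (f : R →+* S) (x : ℍ[R]) : (map f x).re = f x.re := rfl
@[simp] theorem imI_map (f : R →+* S) (x : ℍ[R]) : (map f x).imI = f x.imI := rfl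
@[simp] theorem imJ_map (f : R →+* S) (x : ℍ[R]) : (map f x).imJ = f x.imJ := rfl
@[simp] theorem imK_map (f : R →+* S) (x : ℍ[R]) : (map f x).imK = f x.imK := rfl

theorem map_injective {f : R →+* S} (hf : Function.Injective f) :
    Function.Injective (map f) := fun x y h => by
  simp only [Quaternion.ext_iff, re_map, imI_map, imJ_map, imK_map] at h
  ext <;> apply hf <;> simp only [h]

theorem map_star (f : R →+* S) (x : ℍ[R]) : map f (star x) = star (map f x) := by
  ext <;> simp

theorem normSq_map (f : R →+* S) (x : ℍ[R]) : normSq (map f x) = f (normSq x) := by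
  simp [normSq_def']

end Quaternion

namespace Hurwitz

abbrev ofInt : ℍ[ℤ] →+* ℍ[ℝ] := Quaternion.map (Int.castRingHom ℝ)

theorem ofInt_injective : Function.Injective ofInt := Quaternion.map_injective Int.cast_injective

theorem normSq_ofInt (y : ℍ[ℤ]) : normSq (ofInt y) = normSq y := normSq_map _ y

def ω : ℍ[ℝ] := .mk 2⁻¹ 2⁻¹ 2⁻¹ 2⁻¹

theorem ω_mul_ω : ω * ω = ω - 1 := by
  ext <;> norm_num [ω]

theorem star_ω : star ω = 1 - ω := by
  ext <;> norm_num [ω]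

def lattice : AddSubgroup ℍ[ℝ] where
  carrier := {x | ∃ (y : ℍ[ℤ]) (a : ℤ), x = ofInt y + a • ω}
  zero_mem' := ⟨0, 0, by simp⟩
  add_mem' := by
    rintro _ _ ⟨y, a, rfl⟩ ⟨z, b, rfl⟩
    exact ⟨y + z, a + b, by rw [map_add, add_zsmul]; abel⟩
  neg_mem' := by
    rintro _ ⟨y, a, rfl⟩
    exact ⟨-y, -a, by rw [map_neg, neg_zsmul, neg_add]⟩

theorem ofInt_mem_lattice (y : ℍ[ℤ]) : ofInt y ∈ lattice := ⟨y, 0, by simp⟩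

theorem ofInt_mul_ω_mem_lattice (y : ℍ[ℤ]) : ofInt y * ω ∈ lattice :=
  ⟨.mk (-(y.imI + y.imJ + y.imK)) (-y.imK) (-y.imI) (-y.imJ), y.re + y.imI + y.imJ + y.imK, by
    ext <;> simp [ω, zsmul_eq_mul] <;> ring⟩

theorem ω_mul_ofInt_mem_lattice (y : ℍ[ℤ]) : ω * ofInt y ∈ lattice :=
  ⟨.mk (-(y.imI + y.imJ + y.imK)) (-y.imJ) (-y.imK) (-y.imI), y.re + y.imI + y.imJ + y.imK, by
    ext <;> simp [ω, zsmul_eq_mul] <;> ring⟩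

theorem mul_mem_lattice {x x' : ℍ[ℝ]} (hx : x ∈ lattice) (hx' : x' ∈ lattice) :
    x * x' ∈ lattice := by
  obtain ⟨y, a, rfl⟩ := hx
  obtain ⟨z, b, rfl⟩ := hx'
  have ω_mul_ω_mem : ω * ω ∈ lattice :=
    ⟨-1, 1, by rw [ω_mul_ω, map_neg, map_one, one_zsmul]; abel⟩
  have expand : (ofInt y + a • ω) * (ofInt z + b • ω) =
      ofInt (y * z) + b • (ofInt y * ω) + a • (ω * ofInt z) + (a * b) • (ω * ω) := by
    rw [map_mul]
    simp only [add_mul, mul_add, smul_mul_assoc, mul_smul_comm, smul_add]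
    module
  rw [expand]
  exact add_mem (add_mem (add_mem (ofInt_mem_lattice _) (zsmul_mem (ofInt_mul_ω_mem_lattice y) b))
    (zsmul_mem (ω_mul_ofInt_mem_lattice z) a)) (zsmul_mem ω_mul_ω_mem _)

def order : Subring ℍ[ℝ] :=
  { lattice with
    one_mem' := by simpa using ofInt_mem_lattice 1
    mul_mem' := mul_mem_lattice }

theorem ofInt_mem_order (y : ℍ[ℤ]) : ofInt y ∈ order := ofInt_mem_lattice y

theorem ω_mem_order : ω ∈ order := ⟨0, 1, by simp⟩

theorem star_mem_order {x : ℍ[ℝ]} (hx : x ∈ order) : star x ∈ order := by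
  obtain ⟨y, a, rfl⟩ := hx
  rw [star_add, star_zsmul, ← Quaternion.map_star, star_ω]
  exact add_mem (ofInt_mem_order _) (zsmul_mem (sub_mem (one_mem _) ω_mem_order) a)

theorem inv_two_smul_ofInt_mem_order {d : ℍ[ℤ]} (hre : Odd d.re) (hI : Odd d.imI)
    (hJ : Odd d.imJ) (hK : Odd d.imK) : (2⁻¹ : ℝ) • ofInt d ∈ order := by
  obtain ⟨k₀, h₀⟩ := hre
  obtain ⟨k₁, h₁⟩ := hI
  obtain ⟨k₂, h₂⟩ := hJ
  obtain ⟨k₃, h₃⟩ := hK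
  refine ⟨.mk k₀ k₁ k₂ k₃, 1, ?_⟩
  ext <;> simp [ω, h₀, h₁, h₂, h₃] <;> ring

theorem qi_eq_mk : qi = .mk 0 1 0 0 := rfl
theorem qj_eq_mk : qj = .mk 0 0 1 0 := rfl
theorem qk_eq_mk : qk = .mk 0 0 0 1 := rfl

theorem ofInt_mem_hurwitzUnits {v : ℍ[ℤ]} (hv : normSq v = 1) : ofInt v ∈ hurwitzUnits := by
  rw [normSq_def'] at hv
  have coord : ∀ n : ℤ, n ^ 2 ≤ 1 → n = 0 ∨ n = 1 ∨ n = -1 := fun n hn => by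
    have : -1 ≤ n ∧ n ≤ 1 := ⟨by nlinarith, by nlinarith⟩
    omega
  left
  rcases coord v.re (by nlinarith) with h₀ | h₀ | h₀ <;>
  rcases coord v.imI (by nlinarith) with h₁ | h₁ | h₁ <;>
  rcases coord v.imJ (by nlinarith) with h₂ | h₂ | h₂ <;>
  rcases coord v.imK (by nlinarith) with h₃ | h₃ | h₃ <;>
  simp only [h₀, h₁, h₂, h₃] at hv <;> norm_num at hv <;>
  simp [Quaternion.ext_iff, qi_eq_mk, qj_eq_mk, qk_eq_mk, h₀, h₁, h₂, h₃]

theorem intCast_mem_pm {e : ℤ} (he : e ^ 2 = 1) : (e : ℝ) ∈ pm := by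
  rcases sq_eq_one_iff.mp he with rfl | rfl <;> simp [pm]

theorem inv_two_smul_ofInt_mem_hurwitzUnits {d : ℍ[ℤ]} (hre : Odd d.re) (hI : Odd d.imI)
    (hJ : Odd d.imJ) (hK : Odd d.imK) (hd : normSq d = 4) :
    (2⁻¹ : ℝ) • ofInt d ∈ hurwitzUnits := by
  rw [normSq_def'] at hd
  have one_le_sq : ∀ n : ℤ, Odd n → 1 ≤ n ^ 2 := fun n hn =>
    (one_le_sq_iff_one_le_abs n).2 (Int.one_le_abs (by rintro rfl; simp at hn))
  have := one_le_sq _ hre; have := one_le_sq _ hI; have := one_le_sq _ hJ; have := one_le_sq _ hK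
  refine Or.inr ⟨d.re, intCast_mem_pm (by linarith), d.imI, intCast_mem_pm (by linarith),
    d.imJ, intCast_mem_pm (by linarith), d.imK, intCast_mem_pm (by linarith), ?_⟩
  ext <;> simp [qi_eq_mk, qj_eq_mk, qk_eq_mk]

theorem mem_order_of_mem_hurwitzUnits {x : ℍ[ℝ]} (hx : x ∈ hurwitzUnits) :
    x ∈ order ∧ normSq x = 1 := by
  rcases hx with h | ⟨ε₀, h₀, ε₁, h₁, ε₂, h₂, ε₃, h₃, rfl⟩
  · obtain ⟨v, rfl, hv⟩ : ∃ v : ℍ[ℤ], ofInt v = x ∧ normSq v = 1 := by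
      simp only [Set.mem_insert_iff, Set.mem_singleton_iff] at h
      rcases h with rfl | rfl | rfl | rfl | rfl | rfl | rfl | rfl
      exacts [⟨1, map_one _, map_one _⟩, ⟨-1, by simp, by simp⟩,
        ⟨.mk 0 1 0 0, by ext <;> simp [qi_eq_mk], by simp [normSq_def']⟩,
        ⟨-.mk 0 1 0 0, by ext <;> simp [qi_eq_mk], by simp [normSq_def']⟩,
        ⟨.mk 0 0 1 0, by ext <;> simp [qj_eq_mk], by simp [normSq_def']⟩,
        ⟨-.mk 0 0 1 0, by ext <;> simp [qj_eq_mk], by simp [normSq_def']⟩,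
        ⟨.mk 0 0 0 1, by ext <;> simp [qk_eq_mk], by simp [normSq_def']⟩,
        ⟨-.mk 0 0 0 1, by ext <;> simp [qk_eq_mk], by simp [normSq_def']⟩]
    exact ⟨ofInt_mem_order v, by rw [normSq_ofInt, hv, Int.cast_one]⟩
  · have sign : ∀ ε ∈ pm, ∃ e : ℤ, (e : ℝ) = ε ∧ Odd e ∧ e ^ 2 = 1 := by
      rintro ε (rfl | rfl)
      exacts [⟨1, by simp, by decide, by norm_num⟩, ⟨-1, by simp, by decide, by norm_num⟩]
    obtain ⟨e₀, rfl, o₀, s₀⟩ := sign ε₀ h₀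
    obtain ⟨e₁, rfl, o₁, s₁⟩ := sign ε₁ h₁
    obtain ⟨e₂, rfl, o₂, s₂⟩ := sign ε₂ h₂
    obtain ⟨e₃, rfl, o₃, s₃⟩ := sign ε₃ h₃
    have hx : (2 : ℝ)⁻¹ • ((e₀ : ℝ) • (1 : ℍ[ℝ]) + (e₁ : ℝ) • qi + (e₂ : ℝ) • qj + (e₃ : ℝ) • qk)
        = (2⁻¹ : ℝ) • ofInt (.mk e₀ e₁ e₂ e₃) := by
      ext <;> simp [qi_eq_mk, qj_eq_mk, qk_eq_mk]
    rw [hx, normSq_smul, normSq_ofInt, normSq_def']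
    refine ⟨inv_two_smul_ofInt_mem_order o₀ o₁ o₂ o₃, ?_⟩
    simp only [re_mk, imI_mk, imJ_mk, imK_mk, s₀, s₁, s₂, s₃]
    norm_num

theorem mem_hurwitzUnits_of_mem_order {x : ℍ[ℝ]} (hx : x ∈ order) (nx : normSq x = 1) :
    x ∈ hurwitzUnits := by
  obtain ⟨y, a, rfl⟩ := hx
  obtain ⟨b, hb | hb⟩ := Int.even_or_odd' a
  · have hx : ofInt y + a • ω = ofInt (y + b • .mk 1 1 1 1) := by
      ext <;> simp [ω, zsmul_eq_mul] <;> rw [hb] <;> push_cast <;> ring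
    rw [hx] at nx ⊢
    refine ofInt_mem_hurwitzUnits (Int.cast_injective (α := ℝ) ?_)
    rw [← normSq_ofInt, nx, Int.cast_one]
  · have hx : ofInt y + a • ω = (2⁻¹ : ℝ) • ofInt (.mk (2 * (y.re + b) + 1)
        (2 * (y.imI + b) + 1) (2 * (y.imJ + b) + 1) (2 * (y.imK + b) + 1)) := by
      ext <;> simp [ω, zsmul_eq_mul] <;> rw [hb] <;> push_cast <;> ring
    rw [hx] at nx ⊢
    refine inv_two_smul_ofInt_mem_hurwitzUnits (odd_two_mul_add_one _) (odd_two_mul_add_one _)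
      (odd_two_mul_add_one _) (odd_two_mul_add_one _) (Int.cast_injective (α := ℝ) ?_)
    rw [normSq_smul, normSq_ofInt] at nx
    push_cast
    linarith

theorem mem_hurwitzUnits_iff {x : ℍ[ℝ]} : x ∈ hurwitzUnits ↔ x ∈ order ∧ normSq x = 1 :=
  ⟨mem_order_of_mem_hurwitzUnits, fun h => mem_hurwitzUnits_of_mem_order h.1 h.2⟩

def binaryTetrahedralGroup : Subgroup ℍ[ℝ]ˣ where
  carrier := {u | (u : ℍ[ℝ]) ∈ order ∧ normSq (u : ℍ[ℝ]) = 1}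
  one_mem' := ⟨one_mem _, map_one _⟩
  mul_mem' := fun ⟨hu, nu⟩ ⟨hv, nv⟩ => ⟨mul_mem hu hv, by simp [nu, nv]⟩
  inv_mem' := fun {u} ⟨hu, nu⟩ => by
    have hinv : ((u⁻¹ : ℍ[ℝ]ˣ) : ℍ[ℝ]) = star (u : ℍ[ℝ]) :=
      Units.inv_eq_of_mul_eq_one_right (by rw [self_mul_star, nu, coe_one])
    exact ⟨hinv ▸ star_mem_order hu, by rw [hinv, normSq_star, nu]⟩

theorem image_coe_binaryTetrahedralGroup :
    (fun u : ℍ[ℝ]ˣ => (u : ℍ[ℝ])) '' (binaryTetrahedralGroup : Set ℍ[ℝ]ˣ) = hurwitzUnits := by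
  ext x
  rw [mem_hurwitzUnits_iff]
  constructor
  · rintro ⟨u, hu, rfl⟩
    exact hu
  · rintro ⟨hx, nx⟩
    have x_ne : x ≠ 0 := by rintro rfl; simp at nx
    exact ⟨Units.mk0 x x_ne, ⟨hx, nx⟩, rfl⟩

theorem exists_ofInt_eq_two_smul {x : ℍ[ℝ]} (hx : x ∈ order) :
    ∃ d : ℍ[ℤ], ofInt d = (2 : ℝ) • x := by
  obtain ⟨y, a, rfl⟩ := hx
  exact ⟨y + y + a • .mk 1 1 1 1, by ext <;> simp [ω, zsmul_eq_mul] <;> ring⟩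

theorem normSq_eq_four_of_ofInt_eq_two_smul {x : ℍ[ℝ]} {d : ℍ[ℤ]} (hd : ofInt d = (2 : ℝ) • x)
    (nx : normSq x = 1) : normSq d = 4 :=
  Int.cast_injective (α := ℝ) <| by
    rw [← normSq_ofInt, hd, normSq_smul, nx]
    norm_num

def double (x : ℍ[ℝ]) : ℍ[ℤ] :=
  .mk (round (2 * x.re)) (round (2 * x.imI)) (round (2 * x.imJ)) (round (2 * x.imK))

theorem double_eq {x : ℍ[ℝ]} {d : ℍ[ℤ]} (h : ofInt d = (2 : ℝ) • x) : double x = d := by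
  have h' := Quaternion.ext_iff.1 h
  simp only [re_map, imI_map, imJ_map, imK_map, Quaternion.re_smul, Quaternion.imI_smul,
    Quaternion.imJ_smul, Quaternion.imK_smul, eq_intCast, smul_eq_mul] at h'
  ext <;> simp [double, ← h'.1, ← h'.2.1, ← h'.2.2.1, ← h'.2.2.2]

abbrev toZMod3 : ℍ[ℤ] →+* ℍ[ZMod 3] := Quaternion.map (Int.castRingHom (ZMod 3))

/- On the Hurwitz order `2x` is integral, and `-1 = 2⁻¹` in `ZMod 3`, so this is `x mod 3`. -/
def reduceMod3 (x : ℍ[ℝ]) : ℍ[ZMod 3] := -toZMod3 (double x)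

theorem reduceMod3_eq {x : ℍ[ℝ]} {d : ℍ[ℤ]} (h : ofInt d = (2 : ℝ) • x) :
    reduceMod3 x = -toZMod3 d := by
  rw [reduceMod3, double_eq h]

theorem two_zsmul_eq_neg {M : Type*} [AddCommGroup M] [Module (ZMod 3) M] (q : M) :
    (2 : ℤ) • q = -q := by
  rw [← Int.cast_smul_eq_zsmul (ZMod 3), show ((2 : ℤ) : ZMod 3) = -1 from rfl, neg_one_smul]

theorem reduceMod3_one : reduceMod3 1 = 1 := by
  rw [reduceMod3_eq (d := 1 + 1) (by rw [map_add, map_one, two_smul]), map_add, map_one,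
    ← two_smul ℤ, two_zsmul_eq_neg, neg_neg]

theorem reduceMod3_mul {x y : ℍ[ℝ]} (hx : x ∈ order) (hy : y ∈ order) :
    reduceMod3 (x * y) = reduceMod3 x * reduceMod3 y := by
  obtain ⟨d, hd⟩ := exists_ofInt_eq_two_smul hx
  obtain ⟨e, he⟩ := exists_ofInt_eq_two_smul hy
  obtain ⟨f, hf⟩ := exists_ofInt_eq_two_smul (mul_mem hx hy)
  have hdef : d * e = (2 : ℤ) • f := ofInt_injective <| by
    rw [map_mul, map_zsmul, hd, he, hf, smul_mul_smul_comm]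
    module
  rw [reduceMod3_eq hd, reduceMod3_eq he, reduceMod3_eq hf, neg_mul_neg, ← map_mul, hdef,
    map_zsmul, two_zsmul_eq_neg]

theorem normSq_reduceMod3 {x : ℍ[ℝ]} (hx : x ∈ order) (nx : normSq x = 1) :
    normSq (reduceMod3 x) = 1 := by
  obtain ⟨d, hd⟩ := exists_ofInt_eq_two_smul hx
  rw [reduceMod3_eq hd, normSq_neg, normSq_map, normSq_eq_four_of_ofInt_eq_two_smul hd nx]
  rfl

theorem eq_two_of_toZMod3_eq_neg_one {d : ℍ[ℤ]} (hd : normSq d = 4) (h : toZMod3 d = -1) :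
    d = 2 := by
  have h₀ : (d.re : ZMod 3) = -1 := congrArg QuaternionAlgebra.re h
  have h₁ : (d.imI : ZMod 3) = 0 := congrArg QuaternionAlgebra.imI h
  have h₂ : (d.imJ : ZMod 3) = 0 := congrArg QuaternionAlgebra.imJ h
  have h₃ : (d.imK : ZMod 3) = 0 := congrArg QuaternionAlgebra.imK h
  rw [normSq_def'] at hd
  have bound : ∀ n : ℤ, n ^ 2 ≤ 4 → -2 ≤ n ∧ n ≤ 2 := fun n hn => ⟨by nlinarith, by nlinarith⟩
  have := bound d.re (by nlinarith); have := bound d.imI (by nlinarith)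
  have := bound d.imJ (by nlinarith); have := bound d.imK (by nlinarith)
  have dvd₀ : (3 : ℤ) ∣ d.re + 1 :=
    (ZMod.intCast_zmod_eq_zero_iff_dvd _ 3).1 (by push_cast; rw [h₀]; ring)
  have dvd₁ := (ZMod.intCast_zmod_eq_zero_iff_dvd _ 3).1 h₁
  have dvd₂ := (ZMod.intCast_zmod_eq_zero_iff_dvd _ 3).1 h₂
  have dvd₃ := (ZMod.intCast_zmod_eq_zero_iff_dvd _ 3).1 h₃
  push_cast at dvd₁ dvd₂ dvd₃
  have imI_eq : d.imI = 0 := by omega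
  have imJ_eq : d.imJ = 0 := by omega
  have imK_eq : d.imK = 0 := by omega
  have re_eq : d.re = 2 := by
    rcases (by omega : d.re = -1 ∨ d.re = 2) with h | h
    · simp [h, imI_eq, imJ_eq, imK_eq] at hd
    · exact h
  ext <;> simp [re_eq, imI_eq, imJ_eq, imK_eq] <;> rfl

theorem sq_valMinAbs_le_one (t : ZMod 3) : t.valMinAbs ^ 2 ≤ 1 := by
  have := ZMod.natAbs_valMinAbs_le t
  have : |t.valMinAbs| ≤ 1 := by rw [Int.abs_eq_natAbs]; omega
  nlinarith [abs_nonneg t.valMinAbs, sq_abs t.valMinAbs]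

theorem exists_reduceMod3_eq (m : ℍ[ZMod 3]) (hm : normSq m = 1) :
    ∃ x ∈ order, normSq x = 1 ∧ reduceMod3 x = m := by
  set e : ℍ[ℤ] := .mk m.re.valMinAbs m.imI.valMinAbs m.imJ.valMinAbs m.imK.valMinAbs
  have he : toZMod3 e = m := by ext <;> simp [e, ZMod.coe_valMinAbs]
  have normSq_e : normSq e = m.re.valMinAbs ^ 2 + m.imI.valMinAbs ^ 2 + m.imJ.valMinAbs ^ 2 +
      m.imK.valMinAbs ^ 2 := by
    simp [normSq_def', e]
  have := sq_valMinAbs_le_one m.re; have := sq_valMinAbs_le_one m.imI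
  have := sq_valMinAbs_le_one m.imJ; have := sq_valMinAbs_le_one m.imK
  have dvd : (3 : ℤ) ∣ normSq e - 1 := by
    rw [← he, normSq_map] at hm
    exact (ZMod.intCast_eq_intCast_iff_dvd_sub 1 _ 3).1 (by rw [Int.cast_one]; exact hm.symm)
  have le_four : normSq e ≤ 4 := by rw [normSq_e]; linarith
  have nonneg : 0 ≤ normSq e := by rw [normSq_e]; positivity
  rcases (by omega : normSq e = 1 ∨ normSq e = 4) with h1 | h4
  · refine ⟨ofInt e, ofInt_mem_order e, by rw [normSq_ofInt, h1, Int.cast_one], ?_⟩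
    rw [reduceMod3_eq (d := e + e) (by rw [map_add, two_smul]), map_add, he, ← two_zsmul,
      two_zsmul_eq_neg, neg_neg]
  · have odd : ∀ t : ZMod 3, t.valMinAbs ^ 2 = 1 → Odd (-t.valMinAbs) := fun t ht =>
      ((Int.odd_pow' two_ne_zero).1 (by rw [ht]; exact odd_one)).neg
    rw [normSq_e] at h4
    refine ⟨(2⁻¹ : ℝ) • ofInt (-e), inv_two_smul_ofInt_mem_order (odd _ (by linarith))
      (odd _ (by linarith)) (odd _ (by linarith)) (odd _ (by linarith)), ?_, ?_⟩
    · rw [normSq_smul, map_neg, normSq_neg, normSq_ofInt, normSq_e, h4]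
      norm_num
    · rw [reduceMod3_eq (d := -e) (by rw [smul_smul]; norm_num), map_neg, neg_neg, he]

def matrixBasis : QuaternionAlgebra.Basis (Matrix (Fin 2) (Fin 2) (ZMod 3)) (-1 : ZMod 3) 0 (-1)
    where
  i := !![0, -1; 1, 0]
  j := !![1, 1; 1, -1]
  k := !![-1, 1; 1, 1]
  i_mul_i := by decide
  j_mul_j := by decide
  i_mul_j := by decide
  j_mul_i := by decide

def toMatrix : ℍ[ZMod 3] →ₐ[ZMod 3] Matrix (Fin 2) (Fin 2) (ZMod 3) := matrixBasis.liftHom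

theorem toMatrix_apply (x : ℍ[ZMod 3]) :
    toMatrix x = !![x.re + x.imJ - x.imK, -x.imI + x.imJ + x.imK;
      x.imI + x.imJ + x.imK, x.re - x.imJ + x.imK] := by
  change matrixBasis.lift x = _
  ext i j
  fin_cases i <;> fin_cases j <;>
    simp [matrixBasis, QuaternionAlgebra.Basis.lift, Matrix.algebraMap_matrix_apply] <;> ring

theorem det_toMatrix (x : ℍ[ZMod 3]) : (toMatrix x).det = normSq x := by
  have h3 : (3 : ZMod 3) = 0 := rfl
  rw [toMatrix_apply, Matrix.det_fin_two_of, normSq_def']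
  linear_combination (-(x.imJ ^ 2) - x.imK ^ 2) * h3

theorem toMatrix_injective : Function.Injective toMatrix := by
  refine (injective_iff_map_eq_zero toMatrix).2 fun x hx => ?_
  have solve : ∀ a b c d : ZMod 3, a + c - d = 0 → -b + c + d = 0 → b + c + d = 0 →
      a - c + d = 0 → a = 0 ∧ b = 0 ∧ c = 0 ∧ d = 0 := by decide
  rw [toMatrix_apply] at hx
  obtain ⟨h₀, h₁, h₂, h₃⟩ := solve _ _ _ _ (congrFun (congrFun hx 0) 0)
    (congrFun (congrFun hx 0) 1) (congrFun (congrFun hx 1) 0) (congrFun (congrFun hx 1) 1)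
  ext <;> simp [h₀, h₁, h₂, h₃]

theorem toMatrix_surjective : Function.Surjective toMatrix := by
  have finrank_eq : Module.finrank (ZMod 3) ℍ[ZMod 3] =
      Module.finrank (ZMod 3) (Matrix (Fin 2) (Fin 2) (ZMod 3)) := by
    simp [Quaternion.finrank_eq_four, Module.finrank_matrix]
  exact (LinearMap.injective_iff_surjective_of_finrank_eq_finrank finrank_eq
    (f := toMatrix.toLinearMap)).1 toMatrix_injective

def toSL : binaryTetrahedralGroup →* Matrix.SpecialLinearGroup (Fin 2) (ZMod 3) where
  toFun u := ⟨toMatrix (reduceMod3 (u : ℍ[ℝ]ˣ)), by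
    rw [det_toMatrix, normSq_reduceMod3 u.2.1 u.2.2]⟩
  map_one' := Subtype.ext <| by simp [reduceMod3_one]
  map_mul' u v := Subtype.ext <| by
    change toMatrix _ = toMatrix _ * toMatrix _
    rw [← map_mul, ← reduceMod3_mul u.2.1 v.2.1]
    rfl

theorem toSL_injective : Function.Injective toSL := by
  refine (injective_iff_map_eq_one toSL).2 fun u hu => ?_
  have hred : reduceMod3 (u : ℍ[ℝ]ˣ) = 1 :=
    toMatrix_injective (by rw [map_one]; exact congrArg Subtype.val hu)
  obtain ⟨d, hd⟩ := exists_ofInt_eq_two_smul u.2.1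
  rw [reduceMod3_eq hd, neg_eq_iff_eq_neg] at hred
  rw [eq_two_of_toZMod3_eq_neg_one (normSq_eq_four_of_ofInt_eq_two_smul hd u.2.2) hred] at hd
  have two_smul_eq : (2 : ℝ) • ((u : ℍ[ℝ]ˣ) : ℍ[ℝ]) = (2 : ℝ) • 1 := by
    rw [← hd, map_ofNat, two_smul, one_add_one_eq_two]
  exact Subtype.ext (Units.ext (smul_right_injective _ two_ne_zero two_smul_eq))

theorem toSL_surjective : Function.Surjective toSL := by
  intro M
  obtain ⟨m, hm⟩ := toMatrix_surjective M
  obtain ⟨x, hx, nx, rx⟩ := exists_reduceMod3_eq m (by rw [← det_toMatrix, hm]; exact M.2)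
  have x_ne : x ≠ 0 := by rintro rfl; simp at nx
  refine ⟨⟨Units.mk0 x x_ne, hx, nx⟩, Subtype.ext ?_⟩
  change toMatrix (reduceMod3 x) = M
  rw [rx, hm]

end Hurwitz

/-- The set of the 24 Hurwitz units is (the underlying set of) a subgroup of
the unit group `ℍˣ`, and this group — the binary tetrahedral group `2T`, the
group of 24 rotors generated by the reflections of `A₃` — is isomorphic as a
group to `SL(2, ℤ/3ℤ)`. -/
theorem binary_tetrahedral_iso_SL2_F3 :
    ∃ G : Subgroup (Quaternion ℝ)ˣ,
      ((fun u : (Quaternion ℝ)ˣ => (u : Quaternion ℝ)) '' (G : Set (Quaternion ℝ)ˣ)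
        = hurwitzUnits) ∧
      Nonempty (G ≃* Matrix.SpecialLinearGroup (Fin 2) (ZMod 3)) :=
  ⟨Hurwitz.binaryTetrahedralGroup, Hurwitz.image_coe_binaryTetrahedralGroup,
    ⟨MulEquiv.ofBijective Hurwitz.toSL ⟨Hurwitz.toSL_injective, Hurwitz.toSL_surjective⟩⟩⟩

end
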